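/- arXiv:2405.16040 — 2 statements merged into one kernel-verified Lean document; each statement's English description precedes it below -/
import Mathlib

section
/- Let d ≥ 1, τ > 0, and let u_1, …, u_n : ℝ^d → [0,1] be measurable integrable functions with S = G_{τ/2} ∗ (Σ_{i=1}^n u_i). Let u, w : ℝ^d → [0,1] be measurable integrable functions, and let φ_w = √(π/τ) (S − Σ_{i=1}^n (G_{τ/2} ∗ u_i)² + S^{1/2} · G_{τ/2} ∗ (S^{1/2}(2w − 1))). If ∫_{ℝ^d} (u − w) φ_w dx ≥ 0, then Ẽ_τ(u) ≥ Ẽ_τ(w); that is, any update of the region that does not decrease the linearized functional ∫ u φ_w dx does not decrease the approximate objective functional Ẽ_τ. -/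
open MeasureTheory Real

/-- The Gaussian kernel `G_t(x) = (4πt)^{-d/2} exp(-|x|²/(4t))` on `ℝ^d`. -/
noncomputable def gauss (d : ℕ) (t : ℝ) (x : EuclideanSpace ℝ (Fin d)) : ℝ :=
  (4 * π * t) ^ (-(d : ℝ) / 2) * Real.exp (-‖x‖ ^ 2 / (4 * t))

/-- Convolution of two functions on `ℝ^d` (w.r.t. Lebesgue measure). -/
noncomputable def conv (d : ℕ) (f g : EuclideanSpace ℝ (Fin d) → ℝ)
    (x : EuclideanSpace ℝ (Fin d)) : ℝ :=
  ∫ y, f y * g (x - y)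

/-- `S = G_{τ/2} ∗ (∑ i, u_i)`. -/
noncomputable def Sfun (d n : ℕ) (τ : ℝ) (w : Fin n → EuclideanSpace ℝ (Fin d) → ℝ)
    (x : EuclideanSpace ℝ (Fin d)) : ℝ :=
  conv d (gauss d (τ / 2)) (fun y => ∑ i, w i y) x

/-- The approximate objective functional `Ẽ_τ`. -/
noncomputable def Etil (d n : ℕ) (τ : ℝ) (w : Fin n → EuclideanSpace ℝ (Fin d) → ℝ)
    (u : EuclideanSpace ℝ (Fin d) → ℝ) : ℝ :=
  Real.sqrt (π / τ) *
      (∫ x, u x * (Sfun d n τ w x - ∑ i, (conv d (gauss d (τ / 2)) (w i) x) ^ 2)) -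
    Real.sqrt (π / τ) *
      (∫ x, u x * Real.sqrt (Sfun d n τ w x) *
        conv d (gauss d (τ / 2)) (fun y => Real.sqrt (Sfun d n τ w y) * (1 - u y)) x)


noncomputable def qk (d : ℕ) (τ : ℝ) (v : EuclideanSpace ℝ (Fin d)) : ℝ :=
  rexp (-(1/τ) * ‖v‖ ^ 2)

variable {d : ℕ}

lemma integrable_qexp {b : ℝ} (hb : 0 < b) :
    Integrable (fun v : EuclideanSpace ℝ (Fin d) => rexp (-b * ‖v‖ ^ 2)) := by
  have h := (GaussianFourier.integrable_cexp_neg_mul_sq_norm_add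
      (b := (b : ℂ)) (by simpa using hb) 0 (0 : EuclideanSpace ℝ (Fin d))).re
  refine h.congr (Filter.Eventually.of_forall fun v => ?_)
  simp only [zero_mul, add_zero, RCLike.re_to_complex]
  rw [show -(b:ℂ) * (‖v‖:ℂ) ^ 2 = ((-b * ‖v‖ ^ 2 : ℝ) : ℂ) from by push_cast; ring,
    Complex.exp_ofReal_re]

lemma gauss_nonneg {t : ℝ} (ht : 0 < t) (x : EuclideanSpace ℝ (Fin d)) : 0 ≤ gauss d t x := by
  unfold gauss; positivity

lemma gauss_continuous (t : ℝ) : Continuous (gauss d t) := by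
  unfold gauss
  exact continuous_const.mul ((continuous_norm.pow 2).neg.div_const _).rexp

lemma gauss_integrable {t : ℝ} (ht : 0 < t) : Integrable (gauss d t) := by
  have h : Integrable (fun v : EuclideanSpace ℝ (Fin d) => rexp (-(1/(4*t)) * ‖v‖ ^ 2)) :=
    integrable_qexp (div_pos one_pos (by linarith))
  have h2 := h.const_mul ((4 * π * t) ^ (-(d : ℝ) / 2))
  have e : ∀ a : ℝ, -(1/(4*t)) * a = -a/(4*t) := fun a => by ring
  simp only [e] at h2
  exact h2

lemma gauss_measurable (t : ℝ) : Measurable (gauss d t) := (gauss_continuous t).measurable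

lemma gauss_even {t : ℝ} (x y : EuclideanSpace ℝ (Fin d)) :
    gauss d t (x - y) = gauss d t (y - x) := by
  unfold gauss; rw [norm_sub_rev]

lemma gauss_rep {τ : ℝ} (hτ : 0 < τ) :
    ∃ c : ℝ, 0 < c ∧ ∀ x y : EuclideanSpace ℝ (Fin d),
      gauss d (τ/2) (x - y) = c * ∫ z, qk d τ (x - z) * qk d τ (y - z) := by
  set I : ℝ := ∫ z : EuclideanSpace ℝ (Fin d), rexp (-(2/τ) * ‖z‖ ^ 2) with hIdef
  have hIint : Integrable (fun z : EuclideanSpace ℝ (Fin d) => rexp (-(2/τ) * ‖z‖ ^ 2)) :=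
    integrable_qexp (by positivity)
  have hIval : I = (π / (2/τ)) ^ ((Module.finrank ℝ (EuclideanSpace ℝ (Fin d)) : ℝ) / 2) := by
    rw [hIdef, GaussianFourier.integral_rexp_neg_mul_sq_norm (by positivity)]
  have hI : 0 < I := by
    rw [hIval]; positivity
  refine ⟨(4 * π * (τ/2)) ^ (-(d : ℝ) / 2) / I, by positivity, fun x y => ?_⟩
  have key : ∀ z : EuclideanSpace ℝ (Fin d), qk d τ (x - z) * qk d τ (y - z) =
      rexp (-(2/τ) * ‖(2:ℝ)⁻¹ • (x + y) - z‖ ^ 2) * rexp (-(1/(2*τ)) * ‖x - y‖ ^ 2) := by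
    intro z
    set m : EuclideanSpace ℝ (Fin d) := (2:ℝ)⁻¹ • (x + y) with hm
    unfold qk
    rw [← Real.exp_add, ← Real.exp_add]
    congr 1
    have h2m : (2:ℝ) • m = x + y := by rw [hm, smul_smul]; norm_num
    have hab : (x - z) + (y - z) = (2:ℝ) • (m - z) := by
      rw [smul_sub, h2m, two_smul]; abel
    have pl := parallelogram_law_with_norm ℝ (x - z) (y - z)
    rw [hab] at pl
    have h2 : (x - z) - (y - z) = x - y := by abel
    rw [h2, norm_smul] at pl
    simp only [Real.norm_ofNat] at pl
    have pl' : 4 * ‖m - z‖ ^ 2 + ‖x - y‖ ^ 2 = 2 * (‖x - z‖ ^ 2 + ‖y - z‖ ^ 2) := by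
      nlinarith [pl]
    linear_combination (1/(2*τ)) * pl'
  have hsub : ∫ z, rexp (-(2/τ) * ‖(2:ℝ)⁻¹ • (x + y) - z‖ ^ 2) = I := by
    rw [hIdef]
    exact integral_sub_left_eq_self (fun z => rexp (-(2/τ) * ‖z‖ ^ 2)) volume _
  have hint2 : ∫ z, qk d τ (x - z) * qk d τ (y - z)
      = rexp (-(1/(2*τ)) * ‖x - y‖ ^ 2) * I := by
    simp_rw [key]
    rw [integral_mul_const, hsub, mul_comm]
  rw [hint2]
  unfold gauss
  have hτ' : τ ≠ 0 := ne_of_gt hτ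
  have hI' : I ≠ 0 := ne_of_gt hI
  have harg : -‖x - y‖ ^ 2 / (4 * (τ/2)) = -(1/(2*τ)) * ‖x - y‖ ^ 2 := by
    field_simp; ring
  rw [harg]
  field_simp

lemma meas_conv {k F : EuclideanSpace ℝ (Fin d) → ℝ} (hk : Measurable k) (hF : Measurable F) :
    Measurable fun x : EuclideanSpace ℝ (Fin d) => ∫ y, k y * F (x - y) := by
  have h : StronglyMeasurable fun z : (EuclideanSpace ℝ (Fin d)) × (EuclideanSpace ℝ (Fin d)) =>
      k z.2 * F (z.1 - z.2) :=
    ((hk.comp measurable_snd).mul (hF.comp (measurable_fst.sub measurable_snd))).stronglyMeasurable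
  exact h.integral_prod_right'.measurable

lemma int_prod_conv {k F : EuclideanSpace ℝ (Fin d) → ℝ} (hk : Integrable k) (hF : Integrable F) :
    Integrable (fun z : (EuclideanSpace ℝ (Fin d)) × (EuclideanSpace ℝ (Fin d)) =>
      k z.2 * F (z.1 - z.2)) ((volume : Measure (EuclideanSpace ℝ (Fin d))).prod volume) := by
  have h := hF.mul_prod hk
  have hc := measurePreserving_sub_prod (volume : Measure (EuclideanSpace ℝ (Fin d))) volume
  have h2 := (hc.integrable_comp h.aestronglyMeasurable).mpr h
  refine h2.congr (Filter.Eventually.of_forall fun z => ?_)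
  simp [Function.comp, mul_comm]

lemma int_conv {k F : EuclideanSpace ℝ (Fin d) → ℝ} (hk : Integrable k) (hF : Integrable F) :
    Integrable fun x : EuclideanSpace ℝ (Fin d) => ∫ y, k y * F (x - y) :=
  (int_prod_conv hk hF).integral_prod_left

/-- integrability of `(x,y) ↦ a x * k (x - y)` -/
lemma int_prod_shear {a k : EuclideanSpace ℝ (Fin d) → ℝ} (ha : Integrable a) (hk : Integrable k) :
    Integrable (fun z : (EuclideanSpace ℝ (Fin d)) × (EuclideanSpace ℝ (Fin d)) =>
      a z.1 * k (z.1 - z.2)) ((volume : Measure (EuclideanSpace ℝ (Fin d))).prod volume) := by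
  have h := ha.mul_prod hk
  have T1 := (measurePreserving_prod_sub_swap (volume : Measure (EuclideanSpace ℝ (Fin d)))
    volume).comp Measure.measurePreserving_swap
  have T2 := (MeasurePreserving.id (volume : Measure (EuclideanSpace ℝ (Fin d)))).prod
    (Measure.measurePreserving_neg (volume : Measure (EuclideanSpace ℝ (Fin d))))
  have T := T2.comp T1
  have h2 := (T.integrable_comp h.aestronglyMeasurable).mpr h
  refine h2.congr (Filter.Eventually.of_forall fun z => ?_)
  simp only [Function.comp, Prod.map, id, Prod.fst_swap, Prod.snd_swap]
  congr 2
  abel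

lemma qk_cont {τ : ℝ} : Continuous (qk d τ) := by
  unfold qk; fun_prop

lemma qk_meas {τ : ℝ} : Measurable (qk d τ) := qk_cont.measurable

lemma qk_nonneg {τ : ℝ} (v : EuclideanSpace ℝ (Fin d)) : 0 ≤ qk d τ v := le_of_lt (Real.exp_pos _)

lemma qk_le_one {τ : ℝ} (hτ : 0 < τ) (v : EuclideanSpace ℝ (Fin d)) : qk d τ v ≤ 1 := by
  unfold qk
  rw [Real.exp_le_one_iff]
  have : 0 ≤ (1/τ) * ‖v‖ ^ 2 := by positivity
  linarith

lemma qk_int {τ : ℝ} (hτ : 0 < τ) : Integrable (qk d τ) := integrable_qexp (by positivity)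

lemma pos_core {τ : ℝ} (hτ : 0 < τ) {h : EuclideanSpace ℝ (Fin d) → ℝ}
    (hm : Measurable h) (hi : Integrable h) :
    0 ≤ ∫ x, h x * ∫ y, gauss d (τ/2) (x - y) * h y := by
  obtain ⟨c, hc, hrep⟩ := gauss_rep (d := d) hτ
  set Ch : ℝ := ∫ y, |h y| with hCh
  set F : EuclideanSpace ℝ (Fin d) → ℝ := fun z => ∫ y, qk d τ (y - z) * h y with hF
  have hFmeas : Measurable F := by
    have : StronglyMeasurable fun p : (EuclideanSpace ℝ (Fin d)) × (EuclideanSpace ℝ (Fin d)) =>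
        qk d τ (p.2 - p.1) * h p.2 :=
      ((qk_meas.comp (measurable_snd.sub measurable_fst)).mul
        (hm.comp measurable_snd)).stronglyMeasurable
    exact this.integral_prod_right'.measurable
  have hqh_int : ∀ z, Integrable (fun y => qk d τ (y - z) * h y) := fun z =>
    hi.bdd_mul ((qk_meas.comp (measurable_id.sub measurable_const)).aestronglyMeasurable)
      (c := 1) (Filter.Eventually.of_forall fun y => by
        rw [Real.norm_eq_abs, abs_of_nonneg (qk_nonneg _)]; exact qk_le_one hτ _)
  have hFbd : ∀ z, |F z| ≤ Ch := by
    intro z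
    rw [hF, hCh]
    have := norm_integral_le_of_norm_le (f := fun y => qk d τ (y - z) * h y) hi.abs
      (Filter.Eventually.of_forall fun y => ?_)
    · simpa using this
    · rw [Real.norm_eq_abs, abs_mul, abs_of_nonneg (qk_nonneg _)]
      calc qk d τ (y - z) * |h y| ≤ 1 * |h y| := by
            have := abs_nonneg (h y); gcongr; exact qk_le_one hτ _
        _ = |h y| := one_mul _
  -- step 1 : kernel factorization of the inner convolution
  have step1 : ∀ x, ∫ y, gauss d (τ/2) (x - y) * h y = c * ∫ z, qk d τ (x - z) * F z := by
    intro x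
    have e1 : ∀ y, gauss d (τ/2) (x - y) * h y
        = c * ∫ z, qk d τ (x - z) * qk d τ (y - z) * h y := by
      intro y
      rw [hrep x y, mul_assoc, ← integral_mul_const]
    have hswap : Integrable (Function.uncurry fun y z =>
        qk d τ (x - z) * qk d τ (y - z) * h y)
        ((volume : Measure (EuclideanSpace ℝ (Fin d))).prod volume) := by
      have hdom : Integrable (fun p : (EuclideanSpace ℝ (Fin d)) × (EuclideanSpace ℝ (Fin d)) =>
          |h p.1| * qk d τ (x - p.2))
          ((volume : Measure (EuclideanSpace ℝ (Fin d))).prod volume) :=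
        hi.abs.mul_prod ((qk_int hτ).comp_sub_left x)
      refine hdom.mono' ?_ (Filter.Eventually.of_forall fun p => ?_)
      · exact (((qk_meas.comp (measurable_const.sub measurable_snd)).mul
          (qk_meas.comp (measurable_fst.sub measurable_snd))).mul
          (hm.comp measurable_fst)).aestronglyMeasurable
      · simp only [Function.uncurry, Real.norm_eq_abs]
        rw [abs_mul, abs_mul, abs_of_nonneg (qk_nonneg _), abs_of_nonneg (qk_nonneg _)]
        calc qk d τ (x - p.2) * qk d τ (p.1 - p.2) * |h p.1|
            ≤ qk d τ (x - p.2) * 1 * |h p.1| := by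
              have := abs_nonneg (h p.1); have := qk_nonneg (d := d) (τ := τ) (x - p.2); gcongr
              exact qk_le_one hτ _
          _ = |h p.1| * qk d τ (x - p.2) := by ring
    calc ∫ y, gauss d (τ/2) (x - y) * h y
        = ∫ y, c * ∫ z, qk d τ (x - z) * qk d τ (y - z) * h y := by simp_rw [e1]
      _ = c * ∫ y, ∫ z, qk d τ (x - z) * qk d τ (y - z) * h y := integral_const_mul c _
      _ = c * ∫ z, ∫ y, qk d τ (x - z) * qk d τ (y - z) * h y := by
          rw [integral_integral_swap hswap]
      _ = c * ∫ z, qk d τ (x - z) * F z := by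
          congr 1
          refine integral_congr_ae (Filter.Eventually.of_forall fun z => ?_)
          dsimp only
          rw [hF]
          simp only
          rw [← integral_const_mul]
          refine integral_congr_ae (Filter.Eventually.of_forall fun y => ?_)
          dsimp only
          ring
  -- step 2: rewrite the whole thing, swap, and conclude
  have hswap2 : Integrable (Function.uncurry fun x z => h x * (qk d τ (x - z) * F z))
      ((volume : Measure (EuclideanSpace ℝ (Fin d))).prod volume) := by
    have hdom : Integrable (fun p : (EuclideanSpace ℝ (Fin d)) × (EuclideanSpace ℝ (Fin d)) =>
        Ch * (|h p.1| * qk d τ (p.1 - p.2)))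
        ((volume : Measure (EuclideanSpace ℝ (Fin d))).prod volume) :=
      (int_prod_shear hi.abs (qk_int hτ)).const_mul Ch
    refine hdom.mono' ?_ (Filter.Eventually.of_forall fun p => ?_)
    · exact ((hm.comp measurable_fst).mul
        ((qk_meas.comp (measurable_fst.sub measurable_snd)).mul
          (hFmeas.comp measurable_snd))).aestronglyMeasurable
    · simp only [Function.uncurry, Real.norm_eq_abs]
      rw [abs_mul, abs_mul, abs_of_nonneg (qk_nonneg _)]
      have h1 : |h p.1| * (qk d τ (p.1 - p.2) * |F p.2|) ≤ |h p.1| * (qk d τ (p.1 - p.2) * Ch) := by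
        have := abs_nonneg (h p.1); have := qk_nonneg (d := d) (τ := τ) (p.1 - p.2); gcongr
        exact hFbd _
      calc |h p.1| * (qk d τ (p.1 - p.2) * |F p.2|) ≤ |h p.1| * (qk d τ (p.1 - p.2) * Ch) := h1
        _ = Ch * (|h p.1| * qk d τ (p.1 - p.2)) := by ring
  calc ∫ x, h x * ∫ y, gauss d (τ/2) (x - y) * h y
      = ∫ x, c * ∫ z, h x * (qk d τ (x - z) * F z) := by
        refine integral_congr_ae (Filter.Eventually.of_forall fun x => ?_)
        dsimp only
        rw [step1 x, integral_const_mul]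
        ring
    _ = c * ∫ x, ∫ z, h x * (qk d τ (x - z) * F z) := integral_const_mul c _
    _ = c * ∫ z, ∫ x, h x * (qk d τ (x - z) * F z) := by rw [integral_integral_swap hswap2]
    _ = c * ∫ z, F z * F z := by
        congr 1
        refine integral_congr_ae (Filter.Eventually.of_forall fun z => ?_)
        dsimp only
        have e2 : ∀ x, h x * (qk d τ (x - z) * F z) = (qk d τ (x - z) * h x) * F z := fun x => by
          ring
        simp_rw [e2]
        rw [integral_mul_const, hF]
    _ ≥ 0 := mul_nonneg hc.le (integral_nonneg fun z => mul_self_nonneg _)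

/-- The bilinear integrand. -/
noncomputable def Wi (d : ℕ) (τ : ℝ) (v f m : EuclideanSpace ℝ (Fin d) → ℝ)
    (z : (EuclideanSpace ℝ (Fin d)) × (EuclideanSpace ℝ (Fin d))) : ℝ :=
  f z.1 * v z.1 * (gauss d (τ / 2) z.2 * (v (z.1 - z.2) * m (z.1 - z.2)))

/-- The bilinear form. -/
noncomputable def Jb (d : ℕ) (τ : ℝ) (v f m : EuclideanSpace ℝ (Fin d) → ℝ) : ℝ :=
  ∫ z, Wi d τ v f m z ∂((volume : Measure (EuclideanSpace ℝ (Fin d))).prod volume)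

section JCalc

variable {τ : ℝ} (hτ : 0 < τ) {v f m : EuclideanSpace ℝ (Fin d) → ℝ}
  {B Cf Cm : ℝ}

lemma J_int (hτ : 0 < τ) (hv : Measurable v) (hvB : ∀ x, |v x| ≤ B)
    (hfm : Measurable f) (hfi : Integrable f)
    (hmm : Measurable m) (hmB : ∀ x, |m x| ≤ Cm) :
    Integrable (Wi d τ v f m) ((volume : Measure (EuclideanSpace ℝ (Fin d))).prod volume) := by
  have hτ2 : 0 < τ / 2 := by linarith
  have hdom : Integrable (fun z : (EuclideanSpace ℝ (Fin d)) × (EuclideanSpace ℝ (Fin d)) =>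
      (B * (B * Cm)) * (|f z.1| * gauss d (τ/2) z.2))
      ((volume : Measure (EuclideanSpace ℝ (Fin d))).prod volume) :=
    (hfi.abs.mul_prod (gauss_integrable hτ2)).const_mul _
  refine hdom.mono' ?_ (Filter.Eventually.of_forall fun z => ?_)
  · exact (((hfm.comp measurable_fst).mul (hv.comp measurable_fst)).mul
      (((gauss_continuous (τ/2)).measurable.comp measurable_snd).mul
        ((hv.comp (measurable_fst.sub measurable_snd)).mul
          (hmm.comp (measurable_fst.sub measurable_snd))))).aestronglyMeasurable
  · have hg := gauss_nonneg hτ2 z.2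
    have h1 : ‖Wi d τ v f m z‖ = |f z.1| * |v z.1| *
        (gauss d (τ/2) z.2 * (|v (z.1 - z.2)| * |m (z.1 - z.2)|)) := by
      unfold Wi
      rw [Real.norm_eq_abs, abs_mul, abs_mul, abs_mul, abs_mul, abs_of_nonneg hg]
    rw [h1]
    have hB : 0 ≤ B := le_trans (abs_nonneg _) (hvB z.1)
    have hCm : 0 ≤ Cm := le_trans (abs_nonneg _) (hmB z.1)
    calc |f z.1| * |v z.1| * (gauss d (τ/2) z.2 * (|v (z.1 - z.2)| * |m (z.1 - z.2)|))
        ≤ |f z.1| * B * (gauss d (τ/2) z.2 * (B * Cm)) := by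
          gcongr <;> first | exact hvB _ | exact hmB _
      _ = (B * (B * Cm)) * (|f z.1| * gauss d (τ/2) z.2) := by ring

lemma J_eq (hτ : 0 < τ) (hv : Measurable v) (hvB : ∀ x, |v x| ≤ B)
    (hfm : Measurable f) (hfi : Integrable f)
    (hmm : Measurable m) (hmB : ∀ x, |m x| ≤ Cm) :
    ∫ x, f x * v x * conv d (gauss d (τ/2)) (fun y => v y * m y) x = Jb d τ v f m := by
  have hint := J_int hτ hv hvB hfm hfi hmm hmB
  have h1 : ∀ x, f x * v x * conv d (gauss d (τ/2)) (fun y => v y * m y) x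
      = ∫ y, Wi d τ v f m (x, y) := by
    intro x
    unfold conv Wi
    exact (integral_const_mul _ _).symm
  simp_rw [h1]
  exact integral_integral hint

lemma J_marg (hτ : 0 < τ) (hv : Measurable v) (hvB : ∀ x, |v x| ≤ B)
    (hfm : Measurable f) (hfi : Integrable f)
    (hmm : Measurable m) (hmB : ∀ x, |m x| ≤ Cm) :
    Integrable (fun x => f x * v x * conv d (gauss d (τ/2)) (fun y => v y * m y) x) := by
  have hint := (J_int hτ hv hvB hfm hfi hmm hmB).integral_prod_left
  refine hint.congr (Filter.Eventually.of_forall fun x => ?_)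
  unfold conv Wi
  beta_reduce
  exact integral_const_mul (f x * v x) fun y => gauss d (τ/2) y * (v (x - y) * m (x - y))

lemma K_eq (hτ : 0 < τ) (hv : Measurable v) (hvB : ∀ x, |v x| ≤ B)
    (hfm : Measurable f) (hfi : Integrable f)
    (hmm : Measurable m) (hmB : ∀ x, |m x| ≤ Cm) :
    Jb d τ v f m = ∫ x, ∫ y, f x * v x * (gauss d (τ/2) (x - y) * (v y * m y)) := by
  rw [← J_eq hτ hv hvB hfm hfi hmm hmB]
  refine integral_congr_ae (Filter.Eventually.of_forall fun x => ?_)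
  dsimp only
  have hsub := integral_sub_left_eq_self
    (fun y => gauss d (τ/2) (x - y) * (v y * m y)) volume x
  simp only [sub_sub_cancel] at hsub
  unfold conv
  beta_reduce
  rw [hsub, integral_const_mul]

lemma K_int (hτ : 0 < τ) (hv : Measurable v) (hvB : ∀ x, |v x| ≤ B)
    (hfm : Measurable f) (hfi : Integrable f)
    (hmm : Measurable m) (hmB : ∀ x, |m x| ≤ Cm) :
    Integrable (fun z : (EuclideanSpace ℝ (Fin d)) × (EuclideanSpace ℝ (Fin d)) =>
      f z.1 * v z.1 * (gauss d (τ/2) (z.1 - z.2) * (v z.2 * m z.2)))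
      ((volume : Measure (EuclideanSpace ℝ (Fin d))).prod volume) := by
  have hτ2 : 0 < τ / 2 := by linarith
  have hdom : Integrable (fun z : (EuclideanSpace ℝ (Fin d)) × (EuclideanSpace ℝ (Fin d)) =>
      (B * (B * Cm)) * (|f z.1| * gauss d (τ/2) (z.1 - z.2)))
      ((volume : Measure (EuclideanSpace ℝ (Fin d))).prod volume) :=
    (int_prod_shear hfi.abs (gauss_integrable hτ2)).const_mul _
  refine hdom.mono' ?_ (Filter.Eventually.of_forall fun z => ?_)
  · exact (((hfm.comp measurable_fst).mul (hv.comp measurable_fst)).mul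
      (((gauss_continuous (τ/2)).measurable.comp (measurable_fst.sub measurable_snd)).mul
        ((hv.comp measurable_snd).mul (hmm.comp measurable_snd)))).aestronglyMeasurable
  · have hg := gauss_nonneg hτ2 (z.1 - z.2)
    have h1 : ‖f z.1 * v z.1 * (gauss d (τ/2) (z.1 - z.2) * (v z.2 * m z.2))‖
        = |f z.1| * |v z.1| * (gauss d (τ/2) (z.1 - z.2) * (|v z.2| * |m z.2|)) := by
      rw [Real.norm_eq_abs, abs_mul, abs_mul, abs_mul, abs_mul, abs_of_nonneg hg]
    rw [h1]
    have hB : 0 ≤ B := le_trans (abs_nonneg _) (hvB z.1)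
    have hCm : 0 ≤ Cm := le_trans (abs_nonneg _) (hmB z.1)
    calc |f z.1| * |v z.1| * (gauss d (τ/2) (z.1 - z.2) * (|v z.2| * |m z.2|))
        ≤ |f z.1| * B * (gauss d (τ/2) (z.1 - z.2) * (B * Cm)) := by
          gcongr <;> first | exact hvB _ | exact hmB _
      _ = (B * (B * Cm)) * (|f z.1| * gauss d (τ/2) (z.1 - z.2)) := by ring

lemma J_symm (hτ : 0 < τ) (hv : Measurable v) (hvB : ∀ x, |v x| ≤ B)
    (hfm : Measurable f) (hfi : Integrable f)
    (hmm : Measurable m) (hmi : Integrable m)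
    (hfB : ∀ x, |f x| ≤ Cf) (hmB : ∀ x, |m x| ≤ Cm) :
    Jb d τ v f m = Jb d τ v m f := by
  rw [K_eq hτ hv hvB hfm hfi hmm hmB, K_eq hτ hv hvB hmm hmi hfm hfB]
  rw [integral_integral (K_int hτ hv hvB hfm hfi hmm hmB),
    integral_integral (K_int hτ hv hvB hmm hmi hfm hfB)]
  rw [← integral_prod_swap]
  refine integral_congr_ae (Filter.Eventually.of_forall fun z => ?_)
  simp only [Prod.fst_swap, Prod.snd_swap]
  rw [gauss_even z.2 z.1]
  ring

lemma J_pos (hτ : 0 < τ) (hv : Measurable v) (hvB : ∀ x, |v x| ≤ B)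
    (hfm : Measurable f) (hfi : Integrable f) (hfB : ∀ x, |f x| ≤ Cf) :
    0 ≤ Jb d τ v f f := by
  have hh_m : Measurable fun x => f x * v x := hfm.mul hv
  have hh_i : Integrable fun x => f x * v x := by
    have h := hfi.bdd_mul hv.aestronglyMeasurable
      (c := B) (Filter.Eventually.of_forall fun x => by rw [Real.norm_eq_abs]; exact hvB x)
    exact h.congr (Filter.Eventually.of_forall fun x => mul_comm _ _)
  have hpos := pos_core hτ hh_m hh_i
  rw [K_eq hτ hv hvB hfm hfi hfm hfB]
  refine le_trans hpos (le_of_eq ?_)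
  refine integral_congr_ae (Filter.Eventually.of_forall fun x => ?_)
  dsimp only
  rw [integral_const_mul]
  congr 1
  refine integral_congr_ae (Filter.Eventually.of_forall fun y => ?_)
  dsimp only
  ring

end JCalc

section JLin
variable {τ : ℝ} {v f m f1 f2 m1 m2 : EuclideanSpace ℝ (Fin d) → ℝ} {B Cf Cm C1 C2 : ℝ}

lemma J_lin_m (hτ : 0 < τ) (hv : Measurable v) (hvB : ∀ x, |v x| ≤ B)
    (hfm : Measurable f) (hfi : Integrable f)
    (hm1 : Measurable m1) (hm1B : ∀ x, |m1 x| ≤ C1)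
    (hm2 : Measurable m2) (hm2B : ∀ x, |m2 x| ≤ C2) (a b : ℝ) :
    Jb d τ v f (fun y => a * m1 y + b * m2 y)
      = a * Jb d τ v f m1 + b * Jb d τ v f m2 := by
  have h1 := J_int hτ hv hvB hfm hfi hm1 hm1B
  have h2 := J_int hτ hv hvB hfm hfi hm2 hm2B
  unfold Jb
  rw [← integral_const_mul, ← integral_const_mul, ← integral_add (h1.const_mul a) (h2.const_mul b)]
  refine integral_congr_ae (Filter.Eventually.of_forall fun z => ?_)
  unfold Wi
  dsimp only
  ring

lemma J_lin_f (hτ : 0 < τ) (hv : Measurable v) (hvB : ∀ x, |v x| ≤ B)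
    (hf1m : Measurable f1) (hf1i : Integrable f1)
    (hf2m : Measurable f2) (hf2i : Integrable f2)
    (hmm : Measurable m) (hmB : ∀ x, |m x| ≤ Cm) (a b : ℝ) :
    Jb d τ v (fun x => a * f1 x + b * f2 x) m
      = a * Jb d τ v f1 m + b * Jb d τ v f2 m := by
  have h1 := J_int hτ hv hvB hf1m hf1i hmm hmB
  have h2 := J_int hτ hv hvB hf2m hf2i hmm hmB
  unfold Jb
  rw [← integral_const_mul, ← integral_const_mul, ← integral_add (h1.const_mul a) (h2.const_mul b)]
  refine integral_congr_ae (Filter.Eventually.of_forall fun z => ?_)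
  unfold Wi
  dsimp only
  ring

end JLin

/-- if an update `u` of the region `w` does not decrease the linearized
functional `∫ u φ_w`, then it does not decrease `Ẽ_τ`. -/
theorem linearized_increase_implies_Etil_increase
    (d n : ℕ) (hd : 1 ≤ d) (τ : ℝ) (hτ : 0 < τ)
    (p : Fin n → EuclideanSpace ℝ (Fin d) → ℝ)
    (hp_meas : ∀ i, Measurable (p i)) (hp_int : ∀ i, Integrable (p i))
    (hp_range : ∀ i x, p i x ∈ Set.Icc (0 : ℝ) 1)
    (u w : EuclideanSpace ℝ (Fin d) → ℝ)
    (hu_meas : Measurable u) (hu_int : Integrable u)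
    (hu_range : ∀ x, u x ∈ Set.Icc (0 : ℝ) 1)
    (hw_meas : Measurable w) (hw_int : Integrable w)
    (hw_range : ∀ x, w x ∈ Set.Icc (0 : ℝ) 1)
    (φ : EuclideanSpace ℝ (Fin d) → ℝ)
    (hφ : φ = fun x => Real.sqrt (π / τ) *
      (Sfun d n τ p x - ∑ i, (conv d (gauss d (τ / 2)) (p i) x) ^ 2 +
        Real.sqrt (Sfun d n τ p x) *
          conv d (gauss d (τ / 2))
            (fun y => Real.sqrt (Sfun d n τ p y) * (2 * w y - 1)) x))
    (h_lin : 0 ≤ ∫ x, (u x - w x) * φ x) :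
    Etil d n τ p w ≤ Etil d n τ p u := by
  have hτ2 : 0 < τ / 2 := by linarith
  set c0 : ℝ := Real.sqrt (π / τ) with hc0def
  have hc0 : 0 ≤ c0 := Real.sqrt_nonneg _
  -- basic boundedness facts for u, w
  have hu1 : ∀ x, |u x| ≤ 1 := fun x =>
    abs_le.mpr ⟨by linarith [(hu_range x).1], (hu_range x).2⟩
  have hw1 : ∀ x, |w x| ≤ 1 := fun x =>
    abs_le.mpr ⟨by linarith [(hw_range x).1], (hw_range x).2⟩
  have huw1 : ∀ x, |u x - w x| ≤ 1 := fun x =>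
    abs_le.mpr ⟨by linarith [(hu_range x).1, (hw_range x).2],
      by linarith [(hu_range x).2, (hw_range x).1]⟩
  have h1u : ∀ x, |1 - u x| ≤ 1 := fun x =>
    abs_le.mpr ⟨by linarith [(hu_range x).2], by linarith [(hu_range x).1]⟩
  have h1w : ∀ x, |1 - w x| ≤ 1 := fun x =>
    abs_le.mpr ⟨by linarith [(hw_range x).2], by linarith [(hw_range x).1]⟩
  have h2w1 : ∀ x, |2 * w x - 1| ≤ 1 := fun x =>
    abs_le.mpr ⟨by linarith [(hw_range x).1], by linarith [(hw_range x).2]⟩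
  have hone : ∀ x : EuclideanSpace ℝ (Fin d), |(fun _ : EuclideanSpace ℝ (Fin d) => (1:ℝ)) x| ≤ 1 :=
    fun x => by norm_num
  have huwm : Measurable fun x => u x - w x := hu_meas.sub hw_meas
  have huwi : Integrable fun x => u x - w x := hu_int.sub hw_int
  have h1um : Measurable fun x => 1 - u x := measurable_const.sub hu_meas
  have h1wm : Measurable fun x => 1 - w x := measurable_const.sub hw_meas
  have h2w1m : Measurable fun x => 2 * w x - 1 := (hw_meas.const_mul 2).sub measurable_const
  have honem : Measurable fun _ : EuclideanSpace ℝ (Fin d) => (1:ℝ) := measurable_const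
  -- facts about S
  have hFm : Measurable fun y => ∑ i, p i y := Finset.measurable_sum _ fun i _ => hp_meas i
  have hFi : Integrable fun y => ∑ i, p i y := integrable_finset_sum _ fun i _ => hp_int i
  have hF0 : ∀ y, 0 ≤ ∑ i, p i y := fun y => Finset.sum_nonneg fun i _ => (hp_range i y).1
  have hFn : ∀ y, (∑ i, p i y) ≤ n := fun y => by
    calc (∑ i, p i y) ≤ ∑ _i : Fin n, (1:ℝ) := Finset.sum_le_sum fun i _ => (hp_range i y).2
      _ = n := by simp
  have hSm : Measurable (Sfun d n τ p) :=
    meas_conv (gauss_measurable (τ/2)) hFm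
  have hSi : Integrable (Sfun d n τ p) := int_conv (gauss_integrable hτ2) hFi
  set γ : ℝ := ∫ y : EuclideanSpace ℝ (Fin d), gauss d (τ/2) y with hγdef
  have hγ0 : 0 ≤ γ := integral_nonneg fun y => gauss_nonneg hτ2 y
  have hS0 : ∀ x, 0 ≤ Sfun d n τ p x := fun x =>
    integral_nonneg fun y => mul_nonneg (gauss_nonneg hτ2 y) (hF0 (x - y))
  have hSle : ∀ x, Sfun d n τ p x ≤ γ * n := by
    intro x
    have hint : Integrable fun y => gauss d (τ/2) y * (∑ i, p i (x - y)) := by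
      have hcomp : Measurable fun y : EuclideanSpace ℝ (Fin d) => ∑ i, p i (x - y) :=
        hFm.comp (measurable_const.sub measurable_id)
      have h := (gauss_integrable (d := d) hτ2).bdd_mul hcomp.aestronglyMeasurable
        (c := n) (Filter.Eventually.of_forall fun y => by
          show ‖∑ i, p i (x - y)‖ ≤ (n : ℝ)
          rw [Real.norm_eq_abs, abs_of_nonneg (hF0 _)]; exact hFn _)
      exact h.congr (Filter.Eventually.of_forall fun y => mul_comm _ _)
    calc Sfun d n τ p x = ∫ y, gauss d (τ/2) y * (∑ i, p i (x - y)) := rfl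
      _ ≤ ∫ y, gauss d (τ/2) y * n := by
          refine integral_mono hint ((gauss_integrable hτ2).mul_const _) fun y => ?_
          have := gauss_nonneg hτ2 y
          gcongr
          exact hFn _
      _ = γ * n := by rw [integral_mul_const]
  -- the weight function v = sqrt S
  have hvm : Measurable fun x => Real.sqrt (Sfun d n τ p x) :=
    Real.continuous_sqrt.measurable.comp hSm
  have hvB : ∀ x, |Real.sqrt (Sfun d n τ p x)| ≤ Real.sqrt (γ * n) := fun x => by
    rw [abs_of_nonneg (Real.sqrt_nonneg _)]
    exact Real.sqrt_le_sqrt (hSle x)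
  -- integrability of the Q-part
  have hKim : ∀ i, Measurable (conv d (gauss d (τ/2)) (p i)) := fun i =>
    meas_conv (gauss_measurable (τ/2)) (hp_meas i)
  have hKii : ∀ i, Integrable (conv d (gauss d (τ/2)) (p i)) := fun i =>
    int_conv (gauss_integrable hτ2) (hp_int i)
  have hKi0 : ∀ i x, 0 ≤ conv d (gauss d (τ/2)) (p i) x := fun i x =>
    integral_nonneg fun y => mul_nonneg (gauss_nonneg hτ2 y) (hp_range i (x - y)).1
  have hKiγ : ∀ i x, conv d (gauss d (τ/2)) (p i) x ≤ γ := by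
    intro i x
    have hint : Integrable fun y => gauss d (τ/2) y * p i (x - y) := by
      have hcomp : Measurable fun y : EuclideanSpace ℝ (Fin d) => p i (x - y) :=
        (hp_meas i).comp (measurable_const.sub measurable_id)
      have h := (gauss_integrable (d := d) hτ2).bdd_mul hcomp.aestronglyMeasurable
        (c := 1) (Filter.Eventually.of_forall fun y => by
          show ‖p i (x - y)‖ ≤ (1 : ℝ)
          rw [Real.norm_eq_abs, abs_of_nonneg (hp_range i _).1]; exact (hp_range i _).2)
      exact h.congr (Filter.Eventually.of_forall fun y => mul_comm _ _)
    calc conv d (gauss d (τ/2)) (p i) x = ∫ y, gauss d (τ/2) y * p i (x - y) := rfl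
      _ ≤ ∫ y, gauss d (τ/2) y * 1 := by
          refine integral_mono hint ((gauss_integrable hτ2).mul_const _) fun y => ?_
          have := gauss_nonneg hτ2 y
          gcongr
          exact (hp_range i _).2
      _ = γ := by simp [hγdef]
  have hKisq : ∀ i, Integrable fun x => (conv d (gauss d (τ/2)) (p i) x) ^ 2 := by
    intro i
    refine ((hKii i).const_mul γ).mono'
      (((hKim i).pow_const 2).aestronglyMeasurable)
      (Filter.Eventually.of_forall fun x => ?_)
    rw [Real.norm_eq_abs, abs_of_nonneg (sq_nonneg _), sq]
    exact mul_le_mul_of_nonneg_right (hKiγ i x) (hKi0 i x)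
  have hQi : Integrable fun x =>
      Sfun d n τ p x - ∑ i, (conv d (gauss d (τ/2)) (p i) x) ^ 2 :=
    hSi.sub (integrable_finset_sum _ fun i _ => hKisq i)
  have hQm : Measurable fun x =>
      Sfun d n τ p x - ∑ i, (conv d (gauss d (τ/2)) (p i) x) ^ 2 :=
    hSm.sub (Finset.measurable_sum _ fun i _ => (hKim i).pow_const 2)
  have haQ : ∀ a : EuclideanSpace ℝ (Fin d) → ℝ, Measurable a → (∀ x, |a x| ≤ 1) →
      Integrable fun x => a x *
        (Sfun d n τ p x - ∑ i, (conv d (gauss d (τ/2)) (p i) x) ^ 2) := by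
    intro a ham haB
    exact hQi.bdd_mul ham.aestronglyMeasurable (c := 1) (Filter.Eventually.of_forall fun x => by
      rw [Real.norm_eq_abs]; exact haB x)
  -- Etil decompositions
  have hEu : Etil d n τ p u = c0 *
      (∫ x, u x * (Sfun d n τ p x - ∑ i, (conv d (gauss d (τ/2)) (p i) x) ^ 2)) -
      c0 * Jb d τ (fun x => Real.sqrt (Sfun d n τ p x)) u (fun y => 1 - u y) := by
    unfold Etil
    rw [J_eq hτ hvm hvB hu_meas hu_int h1um h1u]
  have hEw : Etil d n τ p w = c0 *
      (∫ x, w x * (Sfun d n τ p x - ∑ i, (conv d (gauss d (τ/2)) (p i) x) ^ 2)) -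
      c0 * Jb d τ (fun x => Real.sqrt (Sfun d n τ p x)) w (fun y => 1 - w y) := by
    unfold Etil
    rw [J_eq hτ hvm hvB hw_meas hw_int h1wm h1w]
  -- linear functional decomposition
  have hlin : 0 ≤ c0 *
      (∫ x, (u x - w x) * (Sfun d n τ p x - ∑ i, (conv d (gauss d (τ/2)) (p i) x) ^ 2)) +
      c0 * Jb d τ (fun x => Real.sqrt (Sfun d n τ p x)) (fun x => u x - w x)
        (fun y => 2 * w y - 1) := by
    refine le_trans h_lin (le_of_eq ?_)
    rw [← J_eq hτ hvm hvB huwm huwi h2w1m h2w1]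
    rw [← integral_const_mul, ← integral_const_mul,
      ← integral_add ((haQ _ huwm huw1).const_mul c0)
        ((J_marg hτ hvm hvB huwm huwi h2w1m h2w1).const_mul c0)]
    refine integral_congr_ae (Filter.Eventually.of_forall fun x => ?_)
    rw [hφ]
    dsimp only
    ring
  -- J-algebra
  set V : EuclideanSpace ℝ (Fin d) → ℝ := fun x => Real.sqrt (Sfun d n τ p x) with hVdef
  have e1 : Jb d τ V u (fun y => 1 - u y)
      = 1 * Jb d τ V u (fun _ => 1) + (-1) * Jb d τ V u u := by
    rw [show (fun y => 1 - u y) = fun y => 1 * (fun _ : EuclideanSpace ℝ (Fin d) => (1:ℝ)) y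
        + (-1) * u y from funext fun y => by ring]
    exact J_lin_m hτ hvm hvB hu_meas hu_int honem hone hu_meas hu1 1 (-1)
  have e2 : Jb d τ V w (fun y => 1 - w y)
      = 1 * Jb d τ V w (fun _ => 1) + (-1) * Jb d τ V w w := by
    rw [show (fun y => 1 - w y) = fun y => 1 * (fun _ : EuclideanSpace ℝ (Fin d) => (1:ℝ)) y
        + (-1) * w y from funext fun y => by ring]
    exact J_lin_m hτ hvm hvB hw_meas hw_int honem hone hw_meas hw1 1 (-1)
  have e3 : Jb d τ V (fun x => u x - w x) (fun y => 2 * w y - 1)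
      = 1 * (2 * Jb d τ V u w + (-1) * Jb d τ V u (fun _ => 1))
      + (-1) * (2 * Jb d τ V w w + (-1) * Jb d τ V w (fun _ => 1)) := by
    rw [show (fun x => u x - w x) = fun x => 1 * u x + (-1) * w x from
      funext fun x => by ring]
    rw [J_lin_f hτ hvm hvB hu_meas hu_int hw_meas hw_int h2w1m h2w1 1 (-1)]
    rw [show (fun y => 2 * w y - 1) = fun y => 2 * w y
        + (-1) * (fun _ : EuclideanSpace ℝ (Fin d) => (1:ℝ)) y from funext fun y => by ring]
    rw [J_lin_m hτ hvm hvB hu_meas hu_int hw_meas hw1 honem hone 2 (-1),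
      J_lin_m hτ hvm hvB hw_meas hw_int hw_meas hw1 honem hone 2 (-1)]
  have e4 : Jb d τ V (fun x => u x - w x) (fun y => u y - w y)
      = 1 * (1 * Jb d τ V u u + (-1) * Jb d τ V u w)
      + (-1) * (1 * Jb d τ V w u + (-1) * Jb d τ V w w) := by
    rw [show (fun x : EuclideanSpace ℝ (Fin d) => u x - w x) = fun x => 1 * u x + (-1) * w x from
      funext fun x => by ring]
    rw [J_lin_f hτ hvm hvB hu_meas hu_int hw_meas hw_int
      (show Measurable fun y => 1 * u y + (-1) * w y from by fun_prop)
      (show ∀ x, |1 * u x + (-1) * w x| ≤ 1 from fun x => by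
        have := huw1 x; simpa [sub_eq_add_neg, neg_mul, one_mul, neg_one_mul] using this) 1 (-1)]
    rw [J_lin_m hτ hvm hvB hu_meas hu_int hu_meas hu1 hw_meas hw1 1 (-1),
      J_lin_m hτ hvm hvB hw_meas hw_int hu_meas hu1 hw_meas hw1 1 (-1)]
  have esymm : Jb d τ V u w = Jb d τ V w u :=
    J_symm hτ hvm hvB hu_meas hu_int hw_meas hw_int hu1 hw1
  have epos : 0 ≤ Jb d τ V (fun x => u x - w x) (fun y => u y - w y) :=
    J_pos hτ hvm hvB huwm huwi huw1
  -- core inequality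
  have hcore : Jb d τ V u (fun y => 1 - u y)
      + Jb d τ V (fun x => u x - w x) (fun y => 2 * w y - 1)
      ≤ Jb d τ V w (fun y => 1 - w y) := by
    rw [e1, e2, e3]
    rw [e4] at epos
    linarith [epos, esymm]
  -- conclusion
  have hsubQ : ∫ x, (u x - w x) * (Sfun d n τ p x - ∑ i, (conv d (gauss d (τ/2)) (p i) x) ^ 2)
      = (∫ x, u x * (Sfun d n τ p x - ∑ i, (conv d (gauss d (τ/2)) (p i) x) ^ 2))
      - ∫ x, w x * (Sfun d n τ p x - ∑ i, (conv d (gauss d (τ/2)) (p i) x) ^ 2) := by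
    rw [← integral_sub (haQ u hu_meas hu1) (haQ w hw_meas hw1)]
    refine integral_congr_ae (Filter.Eventually.of_forall fun x => ?_)
    ring
  rw [hEu, hEw]
  rw [hsubQ] at hlin
  have hcore' := mul_le_mul_of_nonneg_left hcore hc0
  rw [mul_add] at hcore'
  linarith [hlin, hcore']
end

section
/- Let d ≥ 1, τ > 0, V > 0, and let u_1, …, u_n : ℝ^d → [0,1] be measurable integrable functions with S = G_{τ/2} ∗ (Σ_{i=1}^n u_i). Let w : ℝ^d → {0,1} be measurable with ∫_{ℝ^d} w dx = V, and let φ_w = √(π/τ) (S − Σ_{i=1}^n (G_{τ/2} ∗ u_i)² + S^{1/2} · G_{τ/2} ∗ (S^{1/2}(2w − 1))). Suppose σ ∈ ℝ is such that the superlevel set {x ∈ ℝ^d : φ_w(x) ≥ σ} has Lebesgue measure V, and let u be the indicator function of this set. Then Ẽ_τ(u) ≥ Ẽ_τ(w); that is, one step of the volume-preserving thresholding update does not decrease the approximate objective functional. -/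
open MeasureTheory Real

open RealInnerProductSpace

set_option maxHeartbeats 1000000

namespace MG

variable {d : ℕ} {t : ℝ}

lemma fourpit_pos (ht : 0 < t) : 0 < 4 * π * t := by positivity

lemma gauss_pos (ht : 0 < t) (x : EuclideanSpace ℝ (Fin d)) : 0 < gauss d t x :=
  mul_pos (Real.rpow_pos_of_pos (fourpit_pos ht) _) (Real.exp_pos _)

lemma gauss_nonneg (ht : 0 < t) (x : EuclideanSpace ℝ (Fin d)) : 0 ≤ gauss d t x :=
  (gauss_pos ht x).le

lemma gauss_le (ht : 0 < t) (x : EuclideanSpace ℝ (Fin d)) :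
    gauss d t x ≤ (4 * π * t) ^ (-(d : ℝ) / 2) := by
  have h1 : Real.exp (-‖x‖ ^ 2 / (4 * t)) ≤ 1 := by
    apply Real.exp_le_one_iff.mpr
    have : (0:ℝ) ≤ ‖x‖ ^ 2 := by positivity
    have h4 : (0:ℝ) < 4 * t := by linarith
    apply div_nonpos_of_nonpos_of_nonneg <;> linarith
  calc gauss d t x ≤ (4 * π * t) ^ (-(d : ℝ) / 2) * 1 := by
        unfold gauss
        exact mul_le_mul_of_nonneg_left h1 (Real.rpow_pos_of_pos (fourpit_pos ht) _).le
    _ = _ := mul_one _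

lemma gauss_continuous (d : ℕ) (t : ℝ) : Continuous (gauss d t) := by
  unfold gauss
  exact continuous_const.mul (((continuous_norm.pow 2).neg.div_const _).rexp)

lemma gauss_measurable (d : ℕ) (t : ℝ) : Measurable (gauss d t) :=
  (gauss_continuous d t).measurable

lemma gauss_neg (x : EuclideanSpace ℝ (Fin d)) : gauss d t (-x) = gauss d t x := by
  unfold gauss; rw [norm_neg]

lemma gauss_sub_comm (x y : EuclideanSpace ℝ (Fin d)) :
    gauss d t (x - y) = gauss d t (y - x) := by
  unfold gauss; rw [norm_sub_rev]

lemma gauss_rw (ht : 0 < t) (x : EuclideanSpace ℝ (Fin d)) :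
    gauss d t x = (4 * π * t) ^ (-(d : ℝ) / 2) *
      Real.exp (-(1 / (4 * t)) * ‖x‖ ^ 2 + 0 * ⟪(0 : EuclideanSpace ℝ (Fin d)), x⟫) := by
  unfold gauss
  congr 1
  congr 1
  have h4 : (4 * t) ≠ 0 := by positivity
  field_simp
  simp

/-- Real version of the Gaussian integral with a linear term. -/
lemma integral_rexp_quad {b : ℝ} (hb : 0 < b) (c : ℝ) (w : EuclideanSpace ℝ (Fin d)) :
    ∫ v : EuclideanSpace ℝ (Fin d), Real.exp (-b * ‖v‖ ^ 2 + c * ⟪w, v⟫)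
      = (π / b) ^ ((d : ℝ) / 2) * Real.exp (c ^ 2 * ‖w‖ ^ 2 / (4 * b)) := by
  rw [← Complex.ofReal_inj]
  have hfr : Module.finrank ℝ (EuclideanSpace ℝ (Fin d)) = d := finrank_euclideanSpace_fin
  convert GaussianFourier.integral_cexp_neg_mul_sq_norm_add
      (V := EuclideanSpace ℝ (Fin d)) (show 0 < ((b : ℂ)).re from hb) (c : ℂ) w using 1
  · change Complex.ofRealLI (∫ v : EuclideanSpace ℝ (Fin d), rexp (-b * ‖v‖ ^ 2 + c * ⟪w, v⟫)) = _
    rw [← Complex.ofRealLI.integral_comp_comm]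
    congr 1
    funext v
    simp [Complex.ofRealLI, Complex.ofReal_exp]
    exact (Complex.ofReal_exp _).trans (by congr 1; norm_cast)
  · rw [Complex.ofReal_mul, Complex.ofReal_exp, Complex.ofReal_cpow (by positivity)]
    rw [hfr]
    push_cast
    ring_nf

lemma integrable_rexp_neg_mul_sq_norm {b : ℝ} (hb : 0 < b) :
    Integrable (fun v : EuclideanSpace ℝ (Fin d) => Real.exp (-b * ‖v‖ ^ 2)) := by
  have h := (GaussianFourier.integrable_cexp_neg_mul_sq_norm_add
      (V := EuclideanSpace ℝ (Fin d)) (show 0 < ((b : ℂ)).re from hb) 0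
      (0 : EuclideanSpace ℝ (Fin d))).norm
  refine h.congr (ae_of_all _ fun v => ?_)
  have h2 : (-(b:ℂ) * (‖v‖:ℝ) ^ 2 + 0 * ((inner ℝ (0 : EuclideanSpace ℝ (Fin d)) v : ℝ) : ℂ))
      = ((-b * ‖v‖ ^ 2 : ℝ) : ℂ) := by push_cast; ring
  simp only [Complex.norm_exp]
  rw [h2, Complex.ofReal_re]

lemma integrable_gauss (ht : 0 < t) : Integrable (gauss d t) := by
  have hb : 0 < 1 / (4 * t) := by positivity
  have h0 : Integrable (fun v : EuclideanSpace ℝ (Fin d) =>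
      (4 * π * t) ^ (-(d : ℝ) / 2) * Real.exp (-(1 / (4 * t)) * ‖v‖ ^ 2)) :=
    (integrable_rexp_neg_mul_sq_norm hb).const_mul _
  have hfun : (gauss d t) = (fun v : EuclideanSpace ℝ (Fin d) =>
      (4 * π * t) ^ (-(d : ℝ) / 2) * Real.exp (-(1 / (4 * t)) * ‖v‖ ^ 2)) := by
    funext v
    unfold gauss
    congr 2
    field_simp
  rw [hfun]
  exact h0

lemma integral_gauss (ht : 0 < t) : ∫ x : EuclideanSpace ℝ (Fin d), gauss d t x = 1 := by
  have hb : 0 < 1 / (4 * t) := by positivity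
  have h1 : ∀ x : EuclideanSpace ℝ (Fin d), gauss d t x
      = (4 * π * t) ^ (-(d : ℝ) / 2) * Real.exp (-(1 / (4 * t)) * ‖x‖ ^ 2) := by
    intro x; unfold gauss; congr 1; congr 1; field_simp
  simp only [h1]
  rw [integral_const_mul]
  have h2 := GaussianFourier.integral_rexp_neg_mul_sq_norm
      (V := EuclideanSpace ℝ (Fin d)) hb
  rw [h2, finrank_euclideanSpace_fin]
  have h3 : π / (1 / (4 * t)) = 4 * π * t := by field_simp
  rw [h3, neg_div, Real.rpow_neg (fourpit_pos ht).le]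
  rw [inv_mul_cancel₀]
  exact (Real.rpow_pos_of_pos (fourpit_pos ht) _).ne'

lemma gauss_conv_gauss {s : ℝ} (hs : 0 < s) (ht : 0 < t) (x : EuclideanSpace ℝ (Fin d)) :
    ∫ z : EuclideanSpace ℝ (Fin d), gauss d s z * gauss d t (x - z)
      = gauss d (s + t) x := by
  set B : ℝ := 1 / (4 * s) + 1 / (4 * t) with hB
  have hBpos : 0 < B := by positivity
  have hs4 : (4 * s) ≠ 0 := by positivity
  have ht4 : (4 * t) ≠ 0 := by positivity
  have hst4 : (4 * (s + t)) ≠ 0 := by positivity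
  have key : ∀ z : EuclideanSpace ℝ (Fin d), gauss d s z * gauss d t (x - z)
      = ((4 * π * s) ^ (-(d : ℝ) / 2) * (4 * π * t) ^ (-(d : ℝ) / 2)
          * Real.exp (-‖x‖ ^ 2 / (4 * t)))
        * Real.exp (-B * ‖z‖ ^ 2 + (1 / (2 * t)) * ⟪x, z⟫) := by
    intro z
    unfold gauss
    rw [norm_sub_sq_real]
    have hexp0 : -‖z‖ ^ 2 / (4 * s) + -(‖x‖ ^ 2 - 2 * ⟪x, z⟫ + ‖z‖ ^ 2) / (4 * t)
        = -‖x‖ ^ 2 / (4 * t) + (-B * ‖z‖ ^ 2 + (1 / (2 * t)) * ⟪x, z⟫) := by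
      rw [hB]; field_simp; ring
    rw [mul_mul_mul_comm, ← Real.exp_add, hexp0, Real.exp_add]
    ring
  simp only [key]
  rw [integral_const_mul, integral_rexp_quad hBpos]
  have hexp : -‖x‖ ^ 2 / (4 * t) + (1 / (2 * t)) ^ 2 * ‖x‖ ^ 2 / (4 * B)
      = -‖x‖ ^ 2 / (4 * (s + t)) := by
    rw [hB]; field_simp; ring
  have hpre : (4 * π * s) ^ (-(d : ℝ) / 2) * (4 * π * t) ^ (-(d : ℝ) / 2)
      * (π / B) ^ ((d : ℝ) / 2) = (4 * π * (s + t)) ^ (-(d : ℝ) / 2) := by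
    have h1 : (0:ℝ) ≤ 4 * π * s := by positivity
    have h2 : (0:ℝ) ≤ 4 * π * t := by positivity
    have h3 : (0:ℝ) ≤ π / B := by positivity
    rw [neg_div, Real.rpow_neg h1, Real.rpow_neg h2, Real.rpow_neg (by positivity)]
    rw [← Real.inv_rpow h1, ← Real.inv_rpow h2, ← Real.inv_rpow (by positivity)]
    rw [← Real.mul_rpow (by positivity) (by positivity),
        ← Real.mul_rpow (by positivity) h3]
    congr 1
    rw [hB]
    field_simp
    ring
  unfold gauss
  calc ((4 * π * s) ^ (-(d : ℝ) / 2) * (4 * π * t) ^ (-(d : ℝ) / 2)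
          * Real.exp (-‖x‖ ^ 2 / (4 * t)))
        * ((π / B) ^ ((d : ℝ) / 2) * Real.exp ((1 / (2 * t)) ^ 2 * ‖x‖ ^ 2 / (4 * B)))
      = ((4 * π * s) ^ (-(d : ℝ) / 2) * (4 * π * t) ^ (-(d : ℝ) / 2)
          * (π / B) ^ ((d : ℝ) / 2))
        * Real.exp (-‖x‖ ^ 2 / (4 * t) + (1 / (2 * t)) ^ 2 * ‖x‖ ^ 2 / (4 * B)) := by
        rw [Real.exp_add]; ring
    _ = (4 * π * (s + t)) ^ (-(d : ℝ) / 2) * Real.exp (-‖x‖ ^ 2 / (4 * (s + t))) := by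
        rw [hexp, hpre]

variable {h f g : EuclideanSpace ℝ (Fin d) → ℝ}

lemma conv_integrand_integrable (ht : 0 < t) (hm : Measurable h) {M : ℝ}
    (hb : ∀ y, |h y| ≤ M) (x : EuclideanSpace ℝ (Fin d)) :
    Integrable (fun y => gauss d t y * h (x - y)) := by
  refine Integrable.mono' ((integrable_gauss ht).mul_const M)
    ((gauss_measurable d t).mul (hm.comp (measurable_const.sub measurable_id))).aestronglyMeasurable
    (ae_of_all _ fun y => ?_)
  rw [Real.norm_eq_abs, abs_mul, abs_of_nonneg (gauss_nonneg ht y)]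
  exact mul_le_mul_of_nonneg_left (hb _) (gauss_nonneg ht y)

lemma conv_measurable (hm : Measurable h) :
    Measurable (conv d (gauss d t) h) := by
  have hsm : StronglyMeasurable fun p : (EuclideanSpace ℝ (Fin d)) × (EuclideanSpace ℝ (Fin d)) =>
      gauss d t p.2 * h (p.1 - p.2) :=
    (((gauss_measurable d t).comp measurable_snd).mul
      (hm.comp (measurable_fst.sub measurable_snd))).stronglyMeasurable
  exact hsm.integral_prod_right'.measurable

lemma conv_abs_le (ht : 0 < t) (hm : Measurable h) {M : ℝ}
    (hb : ∀ y, |h y| ≤ M) (x : EuclideanSpace ℝ (Fin d)) :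
    |conv d (gauss d t) h x| ≤ M := by
  have hM : 0 ≤ M := le_trans (abs_nonneg _) (hb 0)
  unfold conv
  rw [← Real.norm_eq_abs]
  refine le_trans (norm_integral_le_integral_norm _) ?_
  have h1 : ∫ y, ‖gauss d t y * h (x - y)‖ ≤ ∫ y, gauss d t y * M := by
    refine integral_mono (conv_integrand_integrable ht hm hb x).norm
      ((integrable_gauss ht).mul_const M) fun y => ?_
    rw [Real.norm_eq_abs, abs_mul, abs_of_nonneg (gauss_nonneg ht y)]
    exact mul_le_mul_of_nonneg_left (hb _) (gauss_nonneg ht y)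
  refine le_trans h1 ?_
  rw [integral_mul_const, integral_gauss ht, one_mul]

lemma conv_nonneg_of_nonneg (ht : 0 < t) (h0 : ∀ y, 0 ≤ h y)
    (x : EuclideanSpace ℝ (Fin d)) : 0 ≤ conv d (gauss d t) h x := by
  unfold conv
  exact integral_nonneg fun y => mul_nonneg (gauss_nonneg ht y) (h0 _)

lemma conv_sub (ht : 0 < t) (hfm : Measurable f) (hgm : Measurable g) {Mf Mg : ℝ}
    (hfb : ∀ y, |f y| ≤ Mf) (hgb : ∀ y, |g y| ≤ Mg) (x : EuclideanSpace ℝ (Fin d)) :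
    conv d (gauss d t) (fun y => f y - g y) x
      = conv d (gauss d t) f x - conv d (gauss d t) g x := by
  unfold conv
  have : ∀ y : EuclideanSpace ℝ (Fin d), gauss d t y * (f (x - y) - g (x - y))
      = gauss d t y * f (x - y) - gauss d t y * g (x - y) := fun y => by ring
  simp only [this]
  exact integral_sub (conv_integrand_integrable ht hfm hfb x)
    (conv_integrand_integrable ht hgm hgb x)

lemma conv_two_sub (ht : 0 < t) (hfm : Measurable f) (hgm : Measurable g) {Mf Mg : ℝ}
    (hfb : ∀ y, |f y| ≤ Mf) (hgb : ∀ y, |g y| ≤ Mg) (x : EuclideanSpace ℝ (Fin d)) :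
    conv d (gauss d t) (fun y => 2 * f y - g y) x
      = 2 * conv d (gauss d t) f x - conv d (gauss d t) g x := by
  unfold conv
  have : ∀ y : EuclideanSpace ℝ (Fin d), gauss d t y * (2 * f (x - y) - g (x - y))
      = 2 * (gauss d t y * f (x - y)) - gauss d t y * g (x - y) := fun y => by ring
  simp only [this]
  rw [integral_sub ((conv_integrand_integrable ht hfm hfb x).const_mul 2)
    (conv_integrand_integrable ht hgm hgb x), integral_const_mul]

lemma conv_def' (h : EuclideanSpace ℝ (Fin d) → ℝ) (x : EuclideanSpace ℝ (Fin d)) :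
    conv d (gauss d t) h x = ∫ z, gauss d t (x - z) * h z := by
  unfold conv
  have := integral_sub_left_eq_self
    (μ := (volume : Measure (EuclideanSpace ℝ (Fin d))))
    (fun z => gauss d t (x - z) * h z) x
  simp only [sub_sub_cancel] at this
  exact this

lemma int_mul_bdd {f b : EuclideanSpace ℝ (Fin d) → ℝ} (hf : Integrable f)
    (hb : Measurable b) {C : ℝ} (hbC : ∀ x, |b x| ≤ C) :
    Integrable (fun x => f x * b x) := by
  refine Integrable.mono' (hf.abs.mul_const C)
    (hf.aestronglyMeasurable.mul hb.aestronglyMeasurable)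
    (ae_of_all _ fun x => ?_)
  rw [Real.norm_eq_abs, abs_mul]
  exact mul_le_mul_of_nonneg_left (hbC x) (abs_nonneg _)

lemma integrable_gauss_shift (ht : 0 < t) (x : EuclideanSpace ℝ (Fin d)) :
    Integrable (fun z : EuclideanSpace ℝ (Fin d) => gauss d t (x - z)) :=
  (integrable_comp_sub_left (gauss d t) x).mpr (integrable_gauss ht)

lemma integral_gauss_shift (ht : 0 < t) (x : EuclideanSpace ℝ (Fin d)) :
    ∫ z, gauss d t (x - z) = 1 := by
  rw [integral_sub_left_eq_self (gauss d t) volume x]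
  exact integral_gauss ht

lemma conv_kernel_integrable (ht : 0 < t) (hgm : Measurable g) {M : ℝ}
    (hgb : ∀ y, |g y| ≤ M) (x : EuclideanSpace ℝ (Fin d)) :
    Integrable (fun z => gauss d t (x - z) * g z) := by
  refine Integrable.mono' ((integrable_gauss_shift ht x).mul_const M)
    (((gauss_measurable d t).comp (measurable_const.sub measurable_id)).mul
      hgm).aestronglyMeasurable (ae_of_all _ fun z => ?_)
  rw [Real.norm_eq_abs, abs_mul, abs_of_nonneg (gauss_nonneg ht _)]
  exact mul_le_mul_of_nonneg_left (hgb z) (gauss_nonneg ht _)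

lemma prod_integrable (ht : 0 < t) (hfm : Measurable f) (hfi : Integrable f)
    (hgm : Measurable g) {M : ℝ} (hgb : ∀ x, |g x| ≤ M) :
    Integrable (fun p : (EuclideanSpace ℝ (Fin d)) × (EuclideanSpace ℝ (Fin d)) =>
      f p.1 * (gauss d t (p.1 - p.2) * g p.2)) (volume.prod volume) := by
  have hM : 0 ≤ M := le_trans (abs_nonneg _) (hgb 0)
  have hFm : Measurable (fun p : (EuclideanSpace ℝ (Fin d)) × (EuclideanSpace ℝ (Fin d)) =>
      f p.1 * (gauss d t (p.1 - p.2) * g p.2)) :=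
    (hfm.comp measurable_fst).mul
      (((gauss_measurable d t).comp (measurable_fst.sub measurable_snd)).mul
        (hgm.comp measurable_snd))
  rw [integrable_prod_iff hFm.aestronglyMeasurable]
  refine ⟨ae_of_all _ fun x => ((conv_kernel_integrable ht hgm hgb x).const_mul (f x)), ?_⟩
  have hsm : StronglyMeasurable
      (fun p : (EuclideanSpace ℝ (Fin d)) × (EuclideanSpace ℝ (Fin d)) =>
        ‖f p.1 * (gauss d t (p.1 - p.2) * g p.2)‖) := hFm.norm.stronglyMeasurable
  refine Integrable.mono' (hfi.abs.mul_const M)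
    hsm.integral_prod_right'.aestronglyMeasurable (ae_of_all _ fun x => ?_)
  rw [Real.norm_eq_abs, abs_of_nonneg (integral_nonneg fun z => norm_nonneg _)]
  calc ∫ z, ‖f x * (gauss d t (x - z) * g z)‖
      ≤ ∫ z, |f x| * (gauss d t (x - z) * M) := by
        refine integral_mono ((conv_kernel_integrable ht hgm hgb x).const_mul
          (f x)).norm (((integrable_gauss_shift ht x).mul_const M).const_mul _)
          fun z => ?_
        rw [Real.norm_eq_abs, abs_mul, abs_mul, abs_of_nonneg (gauss_nonneg ht _)]
        exact mul_le_mul_of_nonneg_left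
          (mul_le_mul_of_nonneg_left (hgb z) (gauss_nonneg ht _)) (abs_nonneg _)
    _ = |f x| * M := by
        rw [integral_const_mul, integral_mul_const, integral_gauss_shift ht, one_mul]

lemma conv_symm (ht : 0 < t) (hfm : Measurable f) (hfi : Integrable f)
    (hgm : Measurable g) {Mg : ℝ} (hgb : ∀ x, |g x| ≤ Mg) :
    ∫ x, f x * conv d (gauss d t) g x = ∫ x, g x * conv d (gauss d t) f x := by
  have h1 : ∫ x, f x * conv d (gauss d t) g x
      = ∫ x, ∫ z, f x * (gauss d t (x - z) * g z) := by
    congr 1; funext x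
    rw [conv_def']
    exact (integral_const_mul _ _).symm
  rw [h1, integral_integral_swap (prod_integrable ht hfm hfi hgm hgb)]
  congr 1; funext z
  have e : ∀ x, f x * (gauss d t (x - z) * g z) = g z * (gauss d t (z - x) * f x) := by
    intro x; rw [gauss_sub_comm]; ring
  simp only [e]
  rw [integral_const_mul, ← conv_def']

lemma conv_psd (ht : 0 < t) (hm : Measurable h) (hi : Integrable h) {M : ℝ}
    (hb : ∀ x, |h x| ≤ M) :
    0 ≤ ∫ x, h x * conv d (gauss d t) h x := by
  have ht2 : 0 < t / 2 := by linarith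
  have hTm : Measurable (conv d (gauss d (t / 2)) h) := conv_measurable hm
  have hTb : ∀ z, |conv d (gauss d (t / 2)) h z| ≤ M := conv_abs_le ht2 hm hb
  have hgb2 : ∀ (x w : EuclideanSpace ℝ (Fin d)),
      |gauss d (t / 2) (x - w)| ≤ (4 * π * (t / 2)) ^ (-(d : ℝ) / 2) := fun x w => by
    rw [abs_of_nonneg (gauss_nonneg ht2 _)]; exact gauss_le ht2 _
  have hker : ∀ x z : EuclideanSpace ℝ (Fin d), gauss d t (x - z)
      = ∫ w, gauss d (t / 2) (x - w) * gauss d (t / 2) (z - w) := by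
    intro x z
    have h1 : ∫ w, gauss d (t / 2) w * gauss d (t / 2) ((x - z) - w) = gauss d t (x - z) := by
      have := gauss_conv_gauss ht2 ht2 (x - z)
      rwa [show t / 2 + t / 2 = t by ring] at this
    have h2 := integral_sub_left_eq_self (μ := (volume : Measure (EuclideanSpace ℝ (Fin d))))
      (fun w => gauss d (t / 2) (x - w) * gauss d (t / 2) (z - w)) x
    simp only [sub_sub_cancel] at h2
    rw [← h2]
    have h3 : ∀ w : EuclideanSpace ℝ (Fin d),
        gauss d (t / 2) w * gauss d (t / 2) (z - (x - w))
          = gauss d (t / 2) w * gauss d (t / 2) ((x - z) - w) := by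
      intro w
      rw [show z - (x - w) = -((x - z) - w) by abel, gauss_neg]
    simp only [h3]
    exact h1.symm
  have hstep2 : ∀ x, conv d (gauss d t) h x
      = ∫ w, gauss d (t / 2) (x - w) * conv d (gauss d (t / 2)) h w := by
    intro x
    rw [conv_def']
    have e1 : ∀ z : EuclideanSpace ℝ (Fin d), gauss d t (x - z) * h z
        = ∫ w, h z * (gauss d (t / 2) (z - w) * gauss d (t / 2) (x - w)) := by
      intro z
      calc gauss d t (x - z) * h z
          = ∫ w, (gauss d (t / 2) (x - w) * gauss d (t / 2) (z - w)) * h z := by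
            rw [hker x z, integral_mul_const]
        _ = ∫ w, h z * (gauss d (t / 2) (z - w) * gauss d (t / 2) (x - w)) := by
            congr 1; funext w; ring
    simp only [e1]
    rw [integral_integral_swap (prod_integrable ht2 hm hi
      ((gauss_measurable d (t / 2)).comp (measurable_const.sub measurable_id)) (hgb2 x))]
    congr 1; funext w
    calc ∫ z, h z * (gauss d (t / 2) (z - w) * gauss d (t / 2) (x - w))
        = ∫ z, gauss d (t / 2) (x - w) * (gauss d (t / 2) (w - z) * h z) := by
          congr 1; funext z; rw [gauss_sub_comm z w]; ring
      _ = gauss d (t / 2) (x - w) * conv d (gauss d (t / 2)) h w := by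
          rw [integral_const_mul, ← conv_def']
  have hmain : ∫ x, h x * conv d (gauss d t) h x
      = ∫ w, conv d (gauss d (t / 2)) h w * conv d (gauss d (t / 2)) h w := by
    calc ∫ x, h x * conv d (gauss d t) h x
        = ∫ x, ∫ w, h x * (gauss d (t / 2) (x - w) * conv d (gauss d (t / 2)) h w) := by
          congr 1; funext x
          rw [hstep2 x]
          exact (integral_const_mul _ _).symm
      _ = ∫ w, ∫ x, h x * (gauss d (t / 2) (x - w) * conv d (gauss d (t / 2)) h w) :=
          integral_integral_swap (prod_integrable ht2 hm hi hTm hTb)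
      _ = ∫ w, conv d (gauss d (t / 2)) h w * conv d (gauss d (t / 2)) h w := by
          congr 1; funext w
          calc ∫ x, h x * (gauss d (t / 2) (x - w) * conv d (gauss d (t / 2)) h w)
              = ∫ x, conv d (gauss d (t / 2)) h w * (gauss d (t / 2) (w - x) * h x) := by
                congr 1; funext x; rw [gauss_sub_comm x w]; ring
            _ = conv d (gauss d (t / 2)) h w * conv d (gauss d (t / 2)) h w := by
                rw [integral_const_mul, ← conv_def']
  rw [hmain]
  exact integral_nonneg fun w => mul_self_nonneg _

lemma main_ineq {t c : ℝ} (ht : 0 < t) (hc : 0 ≤ c)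
    (A s u w : EuclideanSpace ℝ (Fin d) → ℝ)
    (hAm : Measurable A) {MA : ℝ} (hAb : ∀ x, |A x| ≤ MA)
    (hsm : Measurable s) {Ms : ℝ} (hsb : ∀ x, |s x| ≤ Ms)
    (hum : Measurable u) (hui : Integrable u) (hub : ∀ x, |u x| ≤ 1)
    (hwm : Measurable w) (hwi : Integrable w) (hwb : ∀ x, |w x| ≤ 1)
    (hphi0 : 0 ≤ ∫ x, (u x - w x) *
      (c * (A x + s x * conv d (gauss d t) (fun y => s y * (2 * w y - 1)) x))) :
    c * (∫ x, w x * A x) -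
        c * (∫ x, w x * s x * conv d (gauss d t) (fun y => s y * (1 - w y)) x)
      ≤ c * (∫ x, u x * A x) -
        c * (∫ x, u x * s x * conv d (gauss d t) (fun y => s y * (1 - u y)) x) := by
  have hMs0 : 0 ≤ Ms := le_trans (abs_nonneg _) (hsb 0)
  have hsu_m : Measurable fun y => s y * u y := hsm.mul hum
  have hsw_m : Measurable fun y => s y * w y := hsm.mul hwm
  have hsu_b : ∀ y, |s y * u y| ≤ Ms := fun y => by
    rw [abs_mul]
    calc |s y| * |u y| ≤ Ms * 1 := mul_le_mul (hsb y) (hub y) (abs_nonneg _) hMs0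
      _ = Ms := mul_one _
  have hsw_b : ∀ y, |s y * w y| ≤ Ms := fun y => by
    rw [abs_mul]
    calc |s y| * |w y| ≤ Ms * 1 := mul_le_mul (hsb y) (hwb y) (abs_nonneg _) hMs0
      _ = Ms := mul_one _
  have hK1m : Measurable (conv d (gauss d t) s) := conv_measurable hsm
  have hKum : Measurable (conv d (gauss d t) (fun y => s y * u y)) := conv_measurable hsu_m
  have hKwm : Measurable (conv d (gauss d t) (fun y => s y * w y)) := conv_measurable hsw_m
  have hK1b : ∀ x, |conv d (gauss d t) s x| ≤ Ms := conv_abs_le ht hsm hsb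
  have hKub : ∀ x, |conv d (gauss d t) (fun y => s y * u y) x| ≤ Ms :=
    conv_abs_le ht hsu_m hsu_b
  have hKwb : ∀ x, |conv d (gauss d t) (fun y => s y * w y) x| ≤ Ms :=
    conv_abs_le ht hsw_m hsw_b
  -- generic integrability of v * (s * K)
  have key : ∀ v : EuclideanSpace ℝ (Fin d) → ℝ, Integrable v →
      ∀ r : EuclideanSpace ℝ (Fin d) → ℝ, Measurable r → (∀ x, |r x| ≤ Ms) →
      Integrable fun x => v x * (s x * r x) := by
    intro v hv r hr hrb
    refine int_mul_bdd hv (hsm.mul hr) (C := Ms * Ms) fun x => ?_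
    rw [abs_mul]
    exact mul_le_mul (hsb x) (hrb x) (abs_nonneg _) hMs0
  have iuA : Integrable fun x => u x * A x := int_mul_bdd hui hAm hAb
  have iwA : Integrable fun x => w x * A x := int_mul_bdd hwi hAm hAb
  have iuK1 := key u hui _ hK1m hK1b
  have iwK1 := key w hwi _ hK1m hK1b
  have iuKu := key u hui _ hKum hKub
  have iwKu := key w hwi _ hKum hKub
  have iuKw := key u hui _ hKwm hKwb
  have iwKw := key w hwi _ hKwm hKwb
  -- expansion of the (1 - u) convolutions
  have hconv_u : ∀ x, conv d (gauss d t) (fun y => s y * (1 - u y)) x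
      = conv d (gauss d t) s x - conv d (gauss d t) (fun y => s y * u y) x := by
    intro x
    have e : (fun y => s y * (1 - u y)) = fun y => s y - s y * u y := funext fun y => by ring
    rw [e, conv_sub ht hsm hsu_m hsb hsu_b x]
  have hconv_w : ∀ x, conv d (gauss d t) (fun y => s y * (1 - w y)) x
      = conv d (gauss d t) s x - conv d (gauss d t) (fun y => s y * w y) x := by
    intro x
    have e : (fun y => s y * (1 - w y)) = fun y => s y - s y * w y := funext fun y => by ring
    rw [e, conv_sub ht hsm hsw_m hsb hsw_b x]
  have hw2 : ∀ x, conv d (gauss d t) (fun y => s y * (2 * w y - 1)) x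
      = 2 * conv d (gauss d t) (fun y => s y * w y) x - conv d (gauss d t) s x := by
    intro x
    have e : (fun y => s y * (2 * w y - 1)) = fun y => 2 * (s y * w y) - s y :=
      funext fun y => by ring
    rw [e, conv_two_sub ht hsw_m hsm hsw_b hsb x]
  -- rewrite the two big integrals
  have hIu : ∫ x, u x * s x * conv d (gauss d t) (fun y => s y * (1 - u y)) x
      = (∫ x, u x * (s x * conv d (gauss d t) s x))
        - ∫ x, u x * (s x * conv d (gauss d t) (fun y => s y * u y) x) := by
    have e : ∀ x, u x * s x * conv d (gauss d t) (fun y => s y * (1 - u y)) x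
        = u x * (s x * conv d (gauss d t) s x)
          - u x * (s x * conv d (gauss d t) (fun y => s y * u y) x) := by
      intro x; rw [hconv_u x]; ring
    simp only [e]
    exact integral_sub iuK1 iuKu
  have hIw : ∫ x, w x * s x * conv d (gauss d t) (fun y => s y * (1 - w y)) x
      = (∫ x, w x * (s x * conv d (gauss d t) s x))
        - ∫ x, w x * (s x * conv d (gauss d t) (fun y => s y * w y) x) := by
    have e : ∀ x, w x * s x * conv d (gauss d t) (fun y => s y * (1 - w y)) x
        = w x * (s x * conv d (gauss d t) s x)
          - w x * (s x * conv d (gauss d t) (fun y => s y * w y) x) := by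
      intro x; rw [hconv_w x]; ring
    simp only [e]
    exact integral_sub iwK1 iwKw
  -- positive semidefiniteness
  have hq_int : Integrable fun x => s x * (u x - w x) :=
    (int_mul_bdd (hui.sub hwi) hsm hsb).congr (ae_of_all _ fun x => mul_comm _ _)
  have hq_m : Measurable fun x => s x * (u x - w x) := hsm.mul (hum.sub hwm)
  have hq_b : ∀ x, |s x * (u x - w x)| ≤ Ms * 2 := fun x => by
    rw [abs_mul]
    refine mul_le_mul (hsb x) ?_ (abs_nonneg _) hMs0
    calc |u x - w x| ≤ |u x| + |w x| := abs_sub _ _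
      _ ≤ 1 + 1 := add_le_add (hub x) (hwb x)
      _ = 2 := by norm_num
  have hQ : 0 ≤ ∫ x, (s x * (u x - w x)) *
      conv d (gauss d t) (fun y => s y * (u y - w y)) x :=
    conv_psd ht hq_m hq_int hq_b
  have hKq : ∀ x, conv d (gauss d t) (fun y => s y * (u y - w y)) x
      = conv d (gauss d t) (fun y => s y * u y) x
        - conv d (gauss d t) (fun y => s y * w y) x := by
    intro x
    have e : (fun y => s y * (u y - w y)) = fun y => s y * u y - s y * w y :=
      funext fun y => by ring
    rw [e, conv_sub ht hsu_m hsw_m hsu_b hsw_b x]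
  have hQexp : ∫ x, (s x * (u x - w x)) *
        conv d (gauss d t) (fun y => s y * (u y - w y)) x
      = ((∫ x, u x * (s x * conv d (gauss d t) (fun y => s y * u y) x))
          - ∫ x, u x * (s x * conv d (gauss d t) (fun y => s y * w y) x))
        - ((∫ x, w x * (s x * conv d (gauss d t) (fun y => s y * u y) x))
          - ∫ x, w x * (s x * conv d (gauss d t) (fun y => s y * w y) x)) := by
    have e : ∀ x, (s x * (u x - w x)) *
          conv d (gauss d t) (fun y => s y * (u y - w y)) x
        = (u x * (s x * conv d (gauss d t) (fun y => s y * u y) x)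
            - u x * (s x * conv d (gauss d t) (fun y => s y * w y) x))
          - (w x * (s x * conv d (gauss d t) (fun y => s y * u y) x)
            - w x * (s x * conv d (gauss d t) (fun y => s y * w y) x)) := by
      intro x; rw [hKq x]; ring
    simp only [e]
    have isub1 : Integrable (fun x =>
        u x * (s x * conv d (gauss d t) (fun y => s y * u y) x)
          - u x * (s x * conv d (gauss d t) (fun y => s y * w y) x)) := iuKu.sub iuKw
    have isub2 : Integrable (fun x =>
        w x * (s x * conv d (gauss d t) (fun y => s y * u y) x)
          - w x * (s x * conv d (gauss d t) (fun y => s y * w y) x)) := iwKu.sub iwKw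
    rw [integral_sub isub1 isub2, integral_sub iuKu iuKw, integral_sub iwKu iwKw]
  -- symmetry
  have hsw_int : Integrable fun x => s x * w x :=
    (int_mul_bdd hwi hsm hsb).congr (ae_of_all _ fun x => mul_comm _ _)
  have hsym : ∫ x, w x * (s x * conv d (gauss d t) (fun y => s y * u y) x)
      = ∫ x, u x * (s x * conv d (gauss d t) (fun y => s y * w y) x) := by
    have h1 := conv_symm (d := d) ht (f := fun x => s x * w x) (g := fun y => s y * u y)
      hsw_m hsw_int hsu_m hsu_b
    calc ∫ x, w x * (s x * conv d (gauss d t) (fun y => s y * u y) x)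
        = ∫ x, (s x * w x) * conv d (gauss d t) (fun y => s y * u y) x := by
          congr 1; funext x; ring
      _ = ∫ x, (s x * u x) * conv d (gauss d t) (fun x => s x * w x) x := h1
      _ = ∫ x, u x * (s x * conv d (gauss d t) (fun y => s y * w y) x) := by
          congr 1; funext x; ring
  -- expansion of the threshold integral
  have hphiexp : ∫ x, (u x - w x) *
        (c * (A x + s x * conv d (gauss d t) (fun y => s y * (2 * w y - 1)) x))
      = c * (((∫ x, u x * A x) - ∫ x, w x * A x)
          + (2 * (∫ x, u x * (s x * conv d (gauss d t) (fun y => s y * w y) x))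
            - 2 * ∫ x, w x * (s x * conv d (gauss d t) (fun y => s y * w y) x))
          + ((∫ x, w x * (s x * conv d (gauss d t) s x))
            - ∫ x, u x * (s x * conv d (gauss d t) s x))) := by
    have e : ∀ x, (u x - w x) *
          (c * (A x + s x * conv d (gauss d t) (fun y => s y * (2 * w y - 1)) x))
        = c * ((u x * A x - w x * A x)
            + (2 * (u x * (s x * conv d (gauss d t) (fun y => s y * w y) x))
              - 2 * (w x * (s x * conv d (gauss d t) (fun y => s y * w y) x)))
            + (w x * (s x * conv d (gauss d t) s x)
              - u x * (s x * conv d (gauss d t) s x))) := by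
      intro x; rw [hw2 x]; ring
    simp only [e]
    rw [integral_const_mul]
    congr 1
    have b1 : Integrable (fun x =>
        2 * (u x * (s x * conv d (gauss d t) (fun y => s y * w y) x))) := iuKw.const_mul 2
    have b2 : Integrable (fun x =>
        2 * (w x * (s x * conv d (gauss d t) (fun y => s y * w y) x))) := iwKw.const_mul 2
    have a1 : Integrable (fun x => u x * A x - w x * A x) := iuA.sub iwA
    have a2 : Integrable (fun x =>
        2 * (u x * (s x * conv d (gauss d t) (fun y => s y * w y) x))
          - 2 * (w x * (s x * conv d (gauss d t) (fun y => s y * w y) x))) := b1.sub b2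
    have a3 : Integrable (fun x =>
        w x * (s x * conv d (gauss d t) s x)
          - u x * (s x * conv d (gauss d t) s x)) := iwK1.sub iuK1
    have a12 : Integrable (fun x => (u x * A x - w x * A x)
        + (2 * (u x * (s x * conv d (gauss d t) (fun y => s y * w y) x))
          - 2 * (w x * (s x * conv d (gauss d t) (fun y => s y * w y) x)))) := a1.add a2
    rw [integral_add a12 a3, integral_add a1 a2, integral_sub iuA iwA,
      integral_sub b1 b2, integral_sub iwK1 iuK1, integral_const_mul, integral_const_mul]
  -- put everything together
  rw [hIu, hIw]
  have hphi2 : 0 ≤ c * (((∫ x, u x * A x) - ∫ x, w x * A x)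
      + (2 * (∫ x, u x * (s x * conv d (gauss d t) (fun y => s y * w y) x))
        - 2 * ∫ x, w x * (s x * conv d (gauss d t) (fun y => s y * w y) x))
      + ((∫ x, w x * (s x * conv d (gauss d t) s x))
        - ∫ x, u x * (s x * conv d (gauss d t) s x))) := hphiexp ▸ hphi0
  have hQ2 : 0 ≤ c * (((∫ x, u x * (s x * conv d (gauss d t) (fun y => s y * u y) x))
      - ∫ x, u x * (s x * conv d (gauss d t) (fun y => s y * w y) x))
      - ((∫ x, w x * (s x * conv d (gauss d t) (fun y => s y * u y) x))
        - ∫ x, w x * (s x * conv d (gauss d t) (fun y => s y * w y) x))) :=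
    mul_nonneg hc (hQexp ▸ hQ)
  have hsymc : c * (∫ x, w x * (s x * conv d (gauss d t) (fun y => s y * u y) x))
      = c * ∫ x, u x * (s x * conv d (gauss d t) (fun y => s y * w y) x) := by
    rw [hsym]
  nlinarith [hphi2, hQ2, hsymc]

end MG

/-- one step of the volume-preserving thresholding update (replacing the
binary region `w` by the indicator of a superlevel set of the dominant function `φ_w`
of the same measure `V`) does not decrease `Ẽ_τ`. -/
theorem thresholding_step_increases_Etil
    (d n : ℕ) (hd : 1 ≤ d) (τ V : ℝ) (hτ : 0 < τ) (hV : 0 < V)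
    (p : Fin n → EuclideanSpace ℝ (Fin d) → ℝ)
    (hp_meas : ∀ i, Measurable (p i)) (hp_int : ∀ i, Integrable (p i))
    (hp_range : ∀ i x, p i x ∈ Set.Icc (0 : ℝ) 1)
    (w : EuclideanSpace ℝ (Fin d) → ℝ)
    (hw_meas : Measurable w) (hw_int : Integrable w)
    (hw_bin : ∀ x, w x = 0 ∨ w x = 1)
    (hw_vol : ∫ x, w x = V)
    (φ : EuclideanSpace ℝ (Fin d) → ℝ)
    (hφ : φ = fun x => Real.sqrt (π / τ) *
      (Sfun d n τ p x - ∑ i, (conv d (gauss d (τ / 2)) (p i) x) ^ 2 +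
        Real.sqrt (Sfun d n τ p x) *
          conv d (gauss d (τ / 2))
            (fun y => Real.sqrt (Sfun d n τ p y) * (2 * w y - 1)) x))
    (σ : ℝ)
    (hσ : volume {x : EuclideanSpace ℝ (Fin d) | σ ≤ φ x} = ENNReal.ofReal V)
    (u : EuclideanSpace ℝ (Fin d) → ℝ)
    (hu : u = ({x : EuclideanSpace ℝ (Fin d) | σ ≤ φ x}).indicator fun _ => (1 : ℝ)) :
    Etil d n τ p w ≤ Etil d n τ p u := by
  have ht : 0 < τ / 2 := by linarith
  have hc : 0 ≤ Real.sqrt (π / τ) := Real.sqrt_nonneg _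
  -- basics about S and s
  have hsum_meas : Measurable (fun y => ∑ i, p i y) :=
    Finset.measurable_sum _ fun i _ => hp_meas i
  have hsum_b : ∀ y, |∑ i, p i y| ≤ (n : ℝ) := by
    intro y
    rw [abs_of_nonneg (Finset.sum_nonneg fun i _ => (hp_range i y).1)]
    calc ∑ i, p i y ≤ ∑ _i : Fin n, (1 : ℝ) :=
        Finset.sum_le_sum fun i _ => (hp_range i y).2
      _ = n := by simp
  have hSmeas : Measurable (Sfun d n τ p) := MG.conv_measurable hsum_meas
  have hS0 : ∀ x, 0 ≤ Sfun d n τ p x := fun x =>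
    MG.conv_nonneg_of_nonneg ht (fun y => Finset.sum_nonneg fun i _ => (hp_range i y).1) x
  have hSn : ∀ x, Sfun d n τ p x ≤ (n : ℝ) := fun x =>
    le_trans (le_abs_self _) (MG.conv_abs_le ht hsum_meas hsum_b x)
  have hsm : Measurable (fun x => Real.sqrt (Sfun d n τ p x)) := hSmeas.sqrt
  have hsb : ∀ x, |Real.sqrt (Sfun d n τ p x)| ≤ Real.sqrt n := fun x => by
    rw [abs_of_nonneg (Real.sqrt_nonneg _)]
    exact Real.sqrt_le_sqrt (hSn x)
  -- the function A
  have hCm : ∀ i : Fin n, Measurable (conv d (gauss d (τ / 2)) (p i)) := fun i =>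
    MG.conv_measurable (hp_meas i)
  have hCb : ∀ (i : Fin n) x, |conv d (gauss d (τ / 2)) (p i) x| ≤ 1 := fun i x =>
    MG.conv_abs_le ht (hp_meas i)
      (fun y => abs_le.mpr ⟨by linarith [(hp_range i y).1], (hp_range i y).2⟩) x
  have hAm : Measurable
      (fun x => Sfun d n τ p x - ∑ i, (conv d (gauss d (τ / 2)) (p i) x) ^ 2) :=
    hSmeas.sub (Finset.measurable_sum _ fun i _ => (hCm i).pow_const 2)
  have hsq0 : ∀ x, (0 : ℝ) ≤ ∑ i, (conv d (gauss d (τ / 2)) (p i) x) ^ 2 := fun x =>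
    Finset.sum_nonneg fun i _ => sq_nonneg _
  have hsqn : ∀ x, ∑ i, (conv d (gauss d (τ / 2)) (p i) x) ^ 2 ≤ (n : ℝ) := by
    intro x
    calc ∑ i, (conv d (gauss d (τ / 2)) (p i) x) ^ 2 ≤ ∑ _i : Fin n, (1 : ℝ) :=
        Finset.sum_le_sum fun i _ => by
          have h := abs_le.mp (hCb i x); nlinarith [h.1, h.2]
      _ = n := by simp
  have hAb : ∀ x,
      |Sfun d n τ p x - ∑ i, (conv d (gauss d (τ / 2)) (p i) x) ^ 2| ≤ (n : ℝ) + n :=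
    fun x => abs_le.mpr ⟨by linarith [hS0 x, hsqn x], by linarith [hSn x, hsq0 x]⟩
  -- φ is measurable and bounded
  have h2m : Measurable (fun y => Real.sqrt (Sfun d n τ p y) * (2 * w y - 1)) :=
    hsm.mul ((hw_meas.const_mul 2).sub measurable_const)
  have h2b : ∀ y, |Real.sqrt (Sfun d n τ p y) * (2 * w y - 1)| ≤ Real.sqrt n := by
    intro y
    rw [abs_mul]
    have hb1 : |2 * w y - 1| ≤ 1 := by rcases hw_bin y with h | h <;> rw [h] <;> norm_num
    calc |Real.sqrt (Sfun d n τ p y)| * |2 * w y - 1| ≤ Real.sqrt n * 1 :=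
        mul_le_mul (hsb y) hb1 (abs_nonneg _) (Real.sqrt_nonneg _)
      _ = Real.sqrt n := mul_one _
  have hφm : Measurable φ := by
    rw [hφ]
    exact ((hAm.add (hsm.mul (MG.conv_measurable h2m))).const_mul _)
  have hφb : ∀ x, |φ x| ≤ Real.sqrt (π / τ) * (((n : ℝ) + n) + Real.sqrt n * Real.sqrt n) := by
    intro x
    rw [hφ]
    have hKb := MG.conv_abs_le ht h2m h2b x
    rw [abs_mul, abs_of_nonneg hc]
    refine mul_le_mul_of_nonneg_left ?_ hc
    calc |Sfun d n τ p x - ∑ i, (conv d (gauss d (τ / 2)) (p i) x) ^ 2 +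
          Real.sqrt (Sfun d n τ p x) * conv d (gauss d (τ / 2))
            (fun y => Real.sqrt (Sfun d n τ p y) * (2 * w y - 1)) x|
        ≤ |Sfun d n τ p x - ∑ i, (conv d (gauss d (τ / 2)) (p i) x) ^ 2| +
          |Real.sqrt (Sfun d n τ p x) * conv d (gauss d (τ / 2))
            (fun y => Real.sqrt (Sfun d n τ p y) * (2 * w y - 1)) x| := abs_add_le _ _
      _ ≤ ((n : ℝ) + n) + Real.sqrt n * Real.sqrt n := by
          refine add_le_add (hAb x) ?_
          rw [abs_mul]
          exact mul_le_mul (hsb x) hKb (abs_nonneg _) (Real.sqrt_nonneg _)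
  -- facts about u
  have hAset : MeasurableSet {x : EuclideanSpace ℝ (Fin d) | σ ≤ φ x} :=
    measurableSet_le measurable_const hφm
  have hum : Measurable u := by rw [hu]; exact measurable_const.indicator hAset
  have hui : Integrable u := by
    rw [hu, integrable_indicator_iff hAset]
    refine integrableOn_const ?_
    rw [hσ]; exact ENNReal.ofReal_ne_top
  have huV : ∫ x, u x = V := by
    rw [hu, integral_indicator_const (1 : ℝ) hAset, measureReal_def, hσ, smul_eq_mul, mul_one,
      ENNReal.toReal_ofReal hV.le]
  have hub : ∀ x, |u x| ≤ 1 := by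
    intro x
    rw [hu]
    by_cases hx : x ∈ {x : EuclideanSpace ℝ (Fin d) | σ ≤ φ x}
    · rw [Set.indicator_of_mem hx]; norm_num
    · rw [Set.indicator_of_notMem hx]; norm_num
  have hwb : ∀ x, |w x| ≤ 1 := by
    intro x; rcases hw_bin x with h | h <;> rw [h] <;> norm_num
  -- the threshold inequality
  have hqφ : 0 ≤ ∫ x, (u x - w x) * φ x := by
    have h1 : Integrable fun x => (u x - w x) * (φ x - σ) := by
      refine MG.int_mul_bdd (hui.sub hw_int) (hφm.sub measurable_const)
        (C := Real.sqrt (π / τ) * (((n : ℝ) + n) + Real.sqrt n * Real.sqrt n) + |σ|)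
        fun x => ?_
      calc |φ x - σ| = |φ x + -σ| := by rw [sub_eq_add_neg]
        _ ≤ |φ x| + |-σ| := abs_add_le _ _
        _ = |φ x| + |σ| := by rw [abs_neg]
        _ ≤ _ := add_le_add (hφb x) le_rfl
    have h2 : Integrable fun x => σ * (u x - w x) := (hui.sub hw_int).const_mul σ
    have hsplit : ∫ x, (u x - w x) * φ x
        = (∫ x, (u x - w x) * (φ x - σ)) + ∫ x, σ * (u x - w x) := by
      rw [← integral_add h1 h2]
      congr 1; funext x; ring
    have hzero : ∫ x, σ * (u x - w x) = 0 := by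
      rw [integral_const_mul, integral_sub hui hw_int, huV, hw_vol, sub_self, mul_zero]
    have hpos : 0 ≤ ∫ x, (u x - w x) * (φ x - σ) := by
      refine integral_nonneg fun x => ?_
      show (0 : ℝ) ≤ (u x - w x) * (φ x - σ)
      by_cases hx : x ∈ {x : EuclideanSpace ℝ (Fin d) | σ ≤ φ x}
      · have hux : u x = 1 := by rw [hu]; exact Set.indicator_of_mem hx _
        have hσφ : σ ≤ φ x := hx
        have hw1 : w x ≤ 1 := by rcases hw_bin x with h | h <;> rw [h] <;> norm_num
        rw [hux]
        exact mul_nonneg (by linarith) (by linarith)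
      · have hux : u x = 0 := by rw [hu]; exact Set.indicator_of_notMem hx _
        have hσφ : φ x < σ := not_le.1 hx
        have hw0 : 0 ≤ w x := by rcases hw_bin x with h | h <;> rw [h] <;> norm_num
        rw [hux]
        have hprod := mul_nonneg hw0 (sub_nonneg.mpr hσφ.le)
        nlinarith [hprod]
    rw [hsplit, hzero]; linarith
  -- apply the abstract inequality
  unfold Etil
  refine MG.main_ineq ht hc
    (fun x => Sfun d n τ p x - ∑ i, (conv d (gauss d (τ / 2)) (p i) x) ^ 2)
    (fun x => Real.sqrt (Sfun d n τ p x)) u w hAm hAb hsm hsb hum hui hub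
    hw_meas hw_int hwb ?_
  exact le_of_le_of_eq hqφ (by congr 1; funext x; rw [hφ])
end
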